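/- arXiv:1802.09689 — 2 statements merged into one kernel-verified Lean document; each statement's English description precedes it below -/
import Mathlib

section
/- Suppose ṡ = Δf - μ̂·sgn(s) - k·s and ρ·(dμ̂/dt) = Ψ(s), with |Δf| ≤ μ, k > 0, ρ > 0. Then at any point where s ≠ 0 and Ψ(s) ≥ 0, the derivative of V(s, μ̂) = sgn(s)·s_Δ(s) + (ρ/2)(μ - μ̂)² along trajectories satisfies dV/dt ≤ -k·|s|·Ψ(s) ≤ 0. -/
theorem lyapunov_decrease (φ μ k ρ : ℝ) (hφ : 0 < φ) (hμ : 0 ≤ μ) (hk : 0 < k)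
    (hρ : 0 < ρ) (Δf s μhat : ℝ → ℝ) (t : ℝ)
    (hΔf : ∀ τ, |Δf τ| ≤ μ)
    (hs : HasDerivAt s (Δf t - μhat t * Real.sign (s t) - k * s t) t)
    (hμhat : HasDerivAt μhat ((1 - 2 * φ ^ 2 / (|s t| + φ) ^ 2) / ρ) t)
    (hst : s t ≠ 0)
    (hΨ : 0 ≤ 1 - 2 * φ ^ 2 / (|s t| + φ) ^ 2) :
    ∃ V' : ℝ,
      HasDerivAt (fun τ : ℝ =>
          Real.sign (s τ) * (s τ - 2 * s τ * φ / (|s τ| + φ)) +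
            ρ / 2 * (μ - μhat τ) ^ 2) V' t ∧
      V' ≤ -(k * |s t| * (1 - 2 * φ ^ 2 / (|s t| + φ) ^ 2)) ∧
      -(k * |s t| * (1 - 2 * φ ^ 2 / (|s t| + φ) ^ 2)) ≤ 0 := by
  have hΔft : Δf t ≤ μ := le_trans (le_abs_self _) (hΔf t)
  have hΔft' : -μ ≤ Δf t := neg_le_of_abs_le (hΔf t)
  have hsq : HasDerivAt (fun τ => ρ / 2 * (μ - μhat τ) ^ 2)
      (ρ / 2 * ((2 : ℕ) * (μ - μhat t) ^ 1 *
        -((1 - 2 * φ ^ 2 / (|s t| + φ) ^ 2) / ρ))) t :=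
    ((hμhat.const_sub μ).pow 2).const_mul (ρ / 2)
  rcases hst.lt_or_gt with hneg | hpos
  · -- s t < 0
    have hsgn : Real.sign (s t) = -1 := Real.sign_of_neg hneg
    rw [hsgn] at hs
    have habs : |s t| = -s t := abs_of_neg hneg
    rw [habs] at hΨ hsq ⊢
    set D := Δf t - μhat t * (-1) - k * s t with hD
    have hden : -s t + φ ≠ 0 := ne_of_gt (by linarith)
    have h2 : HasDerivAt (fun τ => 2 * s τ * φ) (2 * D * φ) t :=
      (hs.const_mul 2).mul_const φ
    have h3 : HasDerivAt (fun τ => -s τ + φ) (-D) t := hs.neg.add_const φ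
    have hdiv := h2.div h3 hden
    have hg := ((hs.sub hdiv).const_mul (-1 : ℝ)).add hsq
    have hev : ∀ᶠ τ in nhds t, s τ < 0 :=
      hs.continuousAt.eventually (eventually_lt_nhds hneg)
    have heq : (fun τ : ℝ =>
          Real.sign (s τ) * (s τ - 2 * s τ * φ / (|s τ| + φ)) +
            ρ / 2 * (μ - μhat τ) ^ 2) =ᶠ[nhds t]
        (fun τ => -1 * (s τ - 2 * s τ * φ / (-s τ + φ)) + ρ / 2 * (μ - μhat τ) ^ 2) :=
      hev.mono fun τ hτ => by simp only [Real.sign_of_neg hτ, abs_of_neg hτ]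
    refine ⟨_, hg.congr_of_eventuallyEq heq, ?_, ?_⟩
    · have hkey : -1 * (D - (2 * D * φ * (-s t + φ) - 2 * s t * φ * (-D)) / (-s t + φ) ^ 2) +
          ρ / 2 * ((2 : ℕ) * (μ - μhat t) ^ 1 *
            -((1 - 2 * φ ^ 2 / (-s t + φ) ^ 2) / ρ)) =
          (1 - 2 * φ ^ 2 / (-s t + φ) ^ 2) * (-Δf t - μ) - k * (-s t) * (1 - 2 * φ ^ 2 / (-s t + φ) ^ 2) := by
        rw [hD]
        field_simp
        ring
      rw [hkey]
      have : (1 - 2 * φ ^ 2 / (-s t + φ) ^ 2) * (-Δf t - μ) ≤ 0 :=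
        mul_nonpos_of_nonneg_of_nonpos hΨ (by linarith)
      linarith
    · have : 0 ≤ k * (-s t) * (1 - 2 * φ ^ 2 / (-s t + φ) ^ 2) := by
        apply mul_nonneg (mul_nonneg hk.le (by linarith)) hΨ
      linarith
  · -- s t > 0
    have hsgn : Real.sign (s t) = 1 := Real.sign_of_pos hpos
    rw [hsgn] at hs
    have habs : |s t| = s t := abs_of_pos hpos
    rw [habs] at hΨ hsq ⊢
    set D := Δf t - μhat t * 1 - k * s t with hD
    have hden : s t + φ ≠ 0 := by positivity
    have h2 : HasDerivAt (fun τ => 2 * s τ * φ) (2 * D * φ) t :=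
      (hs.const_mul 2).mul_const φ
    have h3 : HasDerivAt (fun τ => s τ + φ) D t := hs.add_const φ
    have hdiv := h2.div h3 hden
    have hg := (hs.sub hdiv).add hsq
    have hev : ∀ᶠ τ in nhds t, 0 < s τ :=
      hs.continuousAt.eventually (eventually_gt_nhds hpos)
    have heq : (fun τ : ℝ =>
          Real.sign (s τ) * (s τ - 2 * s τ * φ / (|s τ| + φ)) +
            ρ / 2 * (μ - μhat τ) ^ 2) =ᶠ[nhds t]
        (fun τ => (s τ - 2 * s τ * φ / (s τ + φ)) + ρ / 2 * (μ - μhat τ) ^ 2) :=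
      hev.mono fun τ hτ => by simp only [Real.sign_of_pos hτ, abs_of_pos hτ, one_mul]
    refine ⟨_, hg.congr_of_eventuallyEq heq, ?_, ?_⟩
    · have hkey : D - (2 * D * φ * (s t + φ) - 2 * s t * φ * D) / (s t + φ) ^ 2 +
          ρ / 2 * ((2 : ℕ) * (μ - μhat t) ^ 1 *
            -((1 - 2 * φ ^ 2 / (s t + φ) ^ 2) / ρ)) =
          (1 - 2 * φ ^ 2 / (s t + φ) ^ 2) * (Δf t - μ) - k * s t * (1 - 2 * φ ^ 2 / (s t + φ) ^ 2) := by
        rw [hD]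
        field_simp
        ring
      rw [hkey]
      have : (1 - 2 * φ ^ 2 / (s t + φ) ^ 2) * (Δf t - μ) ≤ 0 :=
        mul_nonpos_of_nonneg_of_nonpos hΨ (by linarith)
      linarith
    · have : 0 ≤ k * s t * (1 - 2 * φ ^ 2 / (s t + φ) ^ 2) :=
        mul_nonneg (mul_nonneg hk.le hpos.le) hΨ
      linarith
end

section
/- Suppose s, μ̂ : [0,∞) → ℝ are differentiable with s(t) > 0 for all t in an interval, ṡ = Δf - μ̂ - k·s, μ̂' = max(Ψ(s),0)/ρ where |Δf(t)| ≤ μ. Then the function V'(t) = |s(t)| + μ̂(t)/k satisfies D⁺V'(t) ≤ -k·V'(t) + σ with σ = μ + 1/(kρ), on that interval. -/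
/-! Where `s > 0` the function `|s| + μ̂ / k` is differentiable, so its upper right Dini
derivative is its derivative `ṡ + μ̂' / k = Δf - μ̂ - k s + μ̂' / k`. The `-μ̂` term is exactly
`-k · (μ̂ / k)`, and `Δf ≤ μ`, `max (Ψ s) 0 ≤ 1` bound the rest by `μ + 1 / (k ρ)`. -/

open Filter Topology

theorem HasDerivAt.limsup_slope_zero_right_eq {f : ℝ → ℝ} {f' t : ℝ} (hf : HasDerivAt f f' t) :
    limsup (fun h => (f (t + h) - f t) / h) (𝓝[>] 0) = f' := by
  refine (hf.tendsto_slope_zero_right.congr fun h => ?_).limsup_eq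
  rw [smul_eq_mul, div_eq_inv_mul]

theorem sub_sub_mul_add_div_le {k ρ μ d m s g : ℝ} (hk : 0 < k) (hρ : 0 < ρ) (hd : d ≤ μ)
    (hg : g ≤ 1) : d - m - k * s + g / ρ / k ≤ -k * (s + m / k) + (μ + 1 / (k * ρ)) := by
  have hgain : g / ρ / k ≤ 1 / (k * ρ) := by
    rw [div_div, mul_comm ρ k]
    gcongr
  have hcancel : -k * (s + m / k) = -k * s - m := by
    field_simp
    ring
  linarith

theorem dini_of_trajectory_general (φ k ρ μ : ℝ) (hk : 0 < k) (hρ : 0 < ρ)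
    (I : Set ℝ) (Δf s μhat : ℝ → ℝ)
    (hΔf : ∀ t, |Δf t| ≤ μ)
    (hspos : ∀ t ∈ I, 0 < s t)
    (hs : ∀ t ∈ I, HasDerivAt s (Δf t - μhat t * Real.sign (s t) - k * s t) t)
    (hμhat : ∀ t ∈ I,
      HasDerivAt μhat (max (1 - 2 * φ ^ 2 / (|s t| + φ) ^ 2) 0 / ρ) t) :
    ∀ t ∈ I,
      Filter.limsup
          (fun h : ℝ => ((|s (t + h)| + μhat (t + h) / k) - (|s t| + μhat t / k)) / h)
          (nhdsWithin 0 (Set.Ioi 0))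
        ≤ -k * (|s t| + μhat t / k) + (μ + 1 / (k * ρ)) := by
  intro t ht
  have hst := hspos t ht
  have hV : HasDerivAt (fun τ => |s τ| + μhat τ / k)
      (1 * (Δf t - μhat t * Real.sign (s t) - k * s t)
        + max (1 - 2 * φ ^ 2 / (|s t| + φ) ^ 2) 0 / ρ / k) t :=
    ((hasDerivAt_abs_pos hst).comp t (hs t ht)).add ((hμhat t ht).div_const k)
  rw [hV.limsup_slope_zero_right_eq, Real.sign_of_pos hst, one_mul, mul_one]
  have hgain_le_one : max (1 - 2 * φ ^ 2 / (|s t| + φ) ^ 2) 0 ≤ 1 :=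
    max_le (sub_le_self _ (by positivity)) zero_le_one
  rw [abs_of_pos hst] at hgain_le_one ⊢
  exact sub_sub_mul_add_div_le hk hρ (abs_le.mp (hΔf t)).2 hgain_le_one

theorem dini_of_trajectory (φ k ρ μ : ℝ) (hφ : 0 < φ) (hk : 0 < k) (hρ : 0 < ρ)
    (hμ : 0 ≤ μ) (I : Set ℝ) (Δf s μhat : ℝ → ℝ)
    (hΔf : ∀ t, |Δf t| ≤ μ)
    (hspos : ∀ t ∈ I, 0 < s t)
    (hs : ∀ t ∈ I, HasDerivAt s (Δf t - μhat t * Real.sign (s t) - k * s t) t)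
    (hμhat : ∀ t ∈ I,
      HasDerivAt μhat (max (1 - 2 * φ ^ 2 / (|s t| + φ) ^ 2) 0 / ρ) t) :
    ∀ t ∈ I,
      Filter.limsup
          (fun h : ℝ => ((|s (t + h)| + μhat (t + h) / k) - (|s t| + μhat t / k)) / h)
          (nhdsWithin 0 (Set.Ioi 0))
        ≤ -k * (|s t| + μhat t / k) + (μ + 1 / (k * ρ)) :=
  dini_of_trajectory_general φ k ρ μ hk hρ I Δf s μhat hΔf hspos hs hμhat
end
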